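/- Let μ = (μ_s)_{s≥1} be a probability mass function on the positive integers with μ_1 > 0, and consider the ESC (exchangeable sequences of clusters) random partition model whose EPPF is proportional, for integer partitions of n into k parts, to (k!/n!)∏_{j=1}^k n_j!·μ_{n_j}. Then: (i) the ESC model is balance-averse for every n (i.e. 𝐧 ≺ 𝐧' implies ∏_{j=1}^k n_j!μ_{n_j} ≥ ∏_{j=1}^k n'_j!μ_{n'_j}) if and only if the sequence (s!·μ_s)_{s≥1} is log-convex; (ii) the ESC model is balance-seeking for every n (the reverse product inequality) if and only if the sequence (s!·μ_s)_{s≥1} is log-concave. -/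

import Mathlib

/-- `a` is an integer partition of `n` into `k` parts, indexed by `1, …, k`. -/
def IsIntegerPartition (n k : ℕ) (a : ℕ → ℕ) : Prop :=
  (∀ j, 1 ≤ j → j ≤ k → 1 ≤ a j) ∧
  (∀ i j, 1 ≤ i → i ≤ j → j ≤ k → a j ≤ a i) ∧
  ∑ j ∈ Finset.Icc 1 k, a j = n

/-- `MoreBalanced k a b` means `a ≺ b`: `b` is more balanced than `a`. -/
def MoreBalanced (k : ℕ) (a b : ℕ → ℕ) : Prop :=
  (∀ J, 1 ≤ J → J ≤ k → ∑ j ∈ Finset.Icc 1 J, b j ≤ ∑ j ∈ Finset.Icc 1 J, a j) ∧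
  ∃ j, 1 ≤ j ∧ j ≤ k ∧ a j ≠ b j

/-- The sequence `(a_s)_{s ≥ 1}` has no internal zeros. -/
def NoInternalZeros (W : ℕ → ℝ) : Prop :=
  ∀ u s v : ℕ, 1 ≤ u → u ≤ s → s ≤ v → 0 < W u → 0 < W v → 0 < W s

section EscAux
open Finset

def S (a : ℕ → ℕ) (J : ℕ) : ℕ := ∑ j ∈ Finset.Icc 1 J, a j

lemma S_pred (a : ℕ → ℕ) (j : ℕ) (h : 1 ≤ j) :
    S a j = S a (j - 1) + a j := by
  obtain ⟨m, rfl⟩ : ∃ m, j = m + 1 := ⟨j - 1, by omega⟩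
  simpa [S] using Finset.sum_Icc_succ_top (by omega) a

lemma anti_of_adj (k : ℕ) (a : ℕ → ℕ)
    (h : ∀ t, 1 ≤ t → t + 1 ≤ k → a (t + 1) ≤ a t) :
    ∀ i j, 1 ≤ i → i ≤ j → j ≤ k → a j ≤ a i := by
  intro i j h1 hij hjk
  induction j with
  | zero => omega
  | succ m ih =>
    rcases Nat.eq_or_lt_of_le hij with rfl | hlt
    · exact le_refl _
    · exact le_trans (h m (by omega) (by omega)) (ih (by omega) (by omega))

lemma eq_of_prefix_eq (k : ℕ) (a b : ℕ → ℕ)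
    (h : ∀ J, 1 ≤ J → J ≤ k → S a J = S b J) :
    ∀ j, 1 ≤ j → j ≤ k → a j = b j := by
  intro j h1 hk
  have hpred : S a (j - 1) = S b (j - 1) := by
    rcases Nat.eq_or_lt_of_le h1 with rfl | hlt
    · simp [S]
    · exact h (j - 1) (by omega) (by omega)
  have e1 := S_pred a j h1
  have e2 := S_pred b j h1
  have := h j h1 hk
  omega

/-- The transfer step. -/
lemma transfer_exists (k : ℕ) (a b : ℕ → ℕ)
    (ha1 : ∀ j, 1 ≤ j → j ≤ k → 1 ≤ a j)
    (ha2 : ∀ i j, 1 ≤ i → i ≤ j → j ≤ k → a j ≤ a i)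
    (hb2 : ∀ i j, 1 ≤ i → i ≤ j → j ≤ k → b j ≤ b i)
    (hab : ∀ J, 1 ≤ J → J ≤ k → S b J ≤ S a J)
    (htot : S a k = S b k)
    (hne : ∃ j, 1 ≤ j ∧ j ≤ k ∧ a j ≠ b j) :
    ∃ u v : ℕ, 1 ≤ u ∧ u < v ∧ v ≤ k ∧ 1 ≤ a v ∧ a v + 2 ≤ a u ∧
      (∀ j, 1 ≤ j → j ≤ k →
        1 ≤ Function.update (Function.update a u (a u - 1)) v (a v + 1) j) ∧
      (∀ i j, 1 ≤ i → i ≤ j → j ≤ k →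
        Function.update (Function.update a u (a u - 1)) v (a v + 1) j ≤
        Function.update (Function.update a u (a u - 1)) v (a v + 1) i) ∧
      (∀ J, 1 ≤ J → J ≤ k →
        S b J ≤ S (Function.update (Function.update a u (a u - 1)) v (a v + 1)) J) ∧
      S (Function.update (Function.update a u (a u - 1)) v (a v + 1)) k = S b k ∧
      (∑ J ∈ Icc 1 k, (S (Function.update (Function.update a u (a u - 1)) v (a v + 1)) J - S b J))
        < ∑ J ∈ Icc 1 k, (S a J - S b J) := by
  classical
  -- least index i with S b i < S a i
  have hPex : ∃ j, 1 ≤ j ∧ j ≤ k ∧ S b j < S a j := by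
    obtain ⟨j1, ⟨h11, h1k, h1ne⟩, hmin⟩ :
        ∃ j, (1 ≤ j ∧ j ≤ k ∧ a j ≠ b j) ∧
          ∀ x < j, ¬(1 ≤ x ∧ x ≤ k ∧ a x ≠ b x) :=
      ⟨Nat.find hne, Nat.find_spec hne, fun x hx => Nat.find_min hne hx⟩
    have hpred : S a (j1 - 1) = S b (j1 - 1) := by
      have : ∀ x ∈ Icc 1 (j1 - 1), a x = b x := by
        intro x hx
        simp only [mem_Icc] at hx
        have := hmin x (by omega)
        push_neg at this
        exact this hx.1 (by omega)
      simp only [S]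
      exact Finset.sum_congr rfl this
    have e1 := S_pred a j1 h11
    have e2 := S_pred b j1 h11
    have hle := hab j1 h11 h1k
    exact ⟨j1, h11, h1k, by omega⟩
  obtain ⟨i, ⟨hi1, hik, hilt⟩, himin0⟩ :
      ∃ i, (1 ≤ i ∧ i ≤ k ∧ S b i < S a i) ∧
        ∀ J < i, ¬(1 ≤ J ∧ J ≤ k ∧ S b J < S a J) :=
    ⟨Nat.find hPex, Nat.find_spec hPex, fun J hJ => Nat.find_min hPex hJ⟩
  have himin : ∀ J, 1 ≤ J → J < i → S a J = S b J := by
    intro J h1 hJ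
    have h2 := himin0 J hJ
    push_neg at h2
    have := hab J h1 (by omega)
    have := h2 h1 (by omega)
    omega
  have hpredi : S a (i - 1) = S b (i - 1) := by
    rcases Nat.eq_or_lt_of_le hi1 with h | hlt
    · simp [S, ← h]
    · exact himin (i - 1) (by omega) (by omega)
  have hbia : b i < a i := by
    have e1 := S_pred a i hi1
    have e2 := S_pred b i hi1
    omega
  -- least m > i with S b m = S a m
  have hRex : ∃ J, i < J ∧ J ≤ k ∧ S b J = S a J := by
    refine ⟨k, ?_, le_refl _, htot.symm⟩
    rcases Nat.eq_or_lt_of_le hik with h | h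
    · exfalso; rw [h] at hilt; omega
    · exact h
  obtain ⟨m, ⟨him, hmk, hmeq⟩, hmmin⟩ :
      ∃ m, (i < m ∧ m ≤ k ∧ S b m = S a m) ∧
        ∀ J < m, ¬(i < J ∧ J ≤ k ∧ S b J = S a J) :=
    ⟨Nat.find hRex, Nat.find_spec hRex, fun J hJ => Nat.find_min hRex hJ⟩
  have hwin : ∀ J, i ≤ J → J < m → S b J < S a J := by
    intro J hiJ hJm
    rcases Nat.eq_or_lt_of_le hiJ with h | hlt
    · rw [← h]; exact hilt
    · have h2 := hmmin J hJm
      push_neg at h2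
      have h3 := h2 hlt (by omega)
      have := hab J (by omega) (by omega)
      omega
  -- a m < b m
  have hamb : a m < b m := by
    have e1 := S_pred a m (by omega)
    have e2 := S_pred b m (by omega)
    have := hwin (m - 1) (by omega) (by omega)
    omega
  have ham2 : a m + 2 ≤ a i := by
    have h1 : b m ≤ b i := hb2 i m hi1 (by omega) hmk
    omega
  -- u : end of the run of value (a i)
  obtain ⟨u, hum, ⟨hiu, hau⟩, hugr⟩ :
      ∃ u, u ≤ m ∧ (i ≤ u ∧ a u = a i) ∧
        ∀ t, u < t → t ≤ m → ¬(i ≤ t ∧ a t = a i) :=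
    ⟨Nat.findGreatest (fun t => i ≤ t ∧ a t = a i) m,
      Nat.findGreatest_le m,
      Nat.findGreatest_spec (P := fun t => i ≤ t ∧ a t = a i) (le_of_lt him) ⟨le_refl i, rfl⟩,
      fun t h1 h2 => Nat.findGreatest_is_greatest (P := fun t => i ≤ t ∧ a t = a i) h1 h2⟩
  have hrun : ∀ t, u < t → t ≤ m → a t + 1 ≤ a i := by
    intro t hut htm
    have hne' := hugr t hut htm
    have hle : a t ≤ a i := ha2 i t hi1 (by omega) (by omega)
    have : a t ≠ a i := fun hc => hne' ⟨by omega, hc⟩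
    omega
  have hum' : u < m := by
    rcases Nat.eq_or_lt_of_le hum with h | h
    · exfalso; rw [h] at hau; omega
    · exact h
  -- v : first index after u with a v + 2 ≤ a i
  have hVex : ∃ t, u < t ∧ t ≤ m ∧ a t + 2 ≤ a i := ⟨m, hum', le_refl _, ham2⟩
  obtain ⟨v, ⟨huv, hvm, hav2⟩, hvmin⟩ :
      ∃ v, (u < v ∧ v ≤ m ∧ a v + 2 ≤ a i) ∧
        ∀ t < v, ¬(u < t ∧ t ≤ m ∧ a t + 2 ≤ a i) :=
    ⟨Nat.find hVex, Nat.find_spec hVex, fun t ht => Nat.find_min hVex ht⟩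
  have hbetween : ∀ t, u < t → t < v → a t + 1 = a i := by
    intro t hut htv
    have h1 := hvmin t htv
    push_neg at h1
    have h2 := hrun t hut (by omega)
    have := h1 hut (by omega)
    omega
  -- basic bounds
  have hu1 : 1 ≤ u := by omega
  have hvk : v ≤ k := by omega
  have huk : u ≤ k := by omega
  have hai2 : 2 ≤ a i := by have := ha1 m (by omega) hmk; omega
  have hav1 : 1 ≤ a v := ha1 v (by omega) hvk
  have huvne : u ≠ v := by omega
  set a' := Function.update (Function.update a u (a u - 1)) v (a v + 1) with ha'def
  have ha'v : a' v = a v + 1 := by simp [ha'def]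
  have ha'u : a' u = a u - 1 := by
    simp [ha'def, Function.update_of_ne huvne, Function.update_self]
  have ha'other : ∀ t, t ≠ u → t ≠ v → a' t = a t := by
    intro t h1 h2
    simp [ha'def, Function.update_of_ne h2, Function.update_of_ne h1]
  -- positivity
  have hpos' : ∀ j, 1 ≤ j → j ≤ k → 1 ≤ a' j := by
    intro j h1 hk'
    rcases eq_or_ne j v with rfl | hjv
    · rw [ha'v]; omega
    rcases eq_or_ne j u with rfl | hju
    · rw [ha'u, hau]; omega
    · rw [ha'other j hju hjv]; exact ha1 j h1 hk'
  -- monotonicity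
  have hmono' : ∀ p q, 1 ≤ p → p ≤ q → q ≤ k → a' q ≤ a' p := by
    apply anti_of_adj
    intro t h1 htk
    rcases eq_or_ne t v with h | htv
    · rw [h]
      have hne1 : v + 1 ≠ u := by omega
      have hne2 : v + 1 ≠ v := by omega
      rw [ha'other (v+1) hne1 hne2, ha'v]
      have := ha2 v (v+1) (by omega) (by omega) (by omega)
      omega
    rcases eq_or_ne t u with h | htu
    · rw [h]
      rcases eq_or_ne (u+1) v with he | hne
      · rw [he, ha'v, ha'u, hau]; omega
      · have h3 : u + 1 ≠ u := by omega
        rw [ha'other (u+1) h3 hne, ha'u, hau]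
        have := hbetween (u+1) (by omega) (by omega)
        omega
    rcases eq_or_ne (t+1) v with he | h1v
    · have htu' : u < t := by omega
      have := hbetween t htu' (by omega)
      rw [he, ha'v, ha'other t htu htv]
      omega
    rcases eq_or_ne (t+1) u with he | h1u
    · rw [he, ha'u, ha'other t htu htv]
      have := ha2 t u h1 (by omega) huk
      omega
    · rw [ha'other (t+1) h1u h1v, ha'other t htu htv]
      exact ha2 t (t+1) h1 (by omega) htk
  -- prefix sums of a'
  have hS1 : ∀ J, J < u → S a' J = S a J := by
    intro J hJ
    simp only [S]
    apply Finset.sum_congr rfl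
    intro x hx
    simp only [mem_Icc] at hx
    exact ha'other x (by omega) (by omega)
  have hS2 : ∀ J, u ≤ J → J < v → S a' J + 1 = S a J := by
    intro J hJ1 hJ2
    have huJ : u ∈ Icc 1 J := by simp only [mem_Icc]; omega
    have hvJ : v ∉ Icc 1 J := by simp only [mem_Icc]; omega
    have e1 : S a' J = (a u - 1) + ∑ x ∈ Icc 1 J \ {u}, a x := by
      simp only [S, ha'def]
      rw [Finset.sum_update_of_notMem hvJ, Finset.sum_update_of_mem huJ]
    have e2 : S a J = a u + ∑ x ∈ Icc 1 J \ {u}, a x := by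
      simp only [S]
      rw [← Finset.erase_eq]
      exact (Finset.add_sum_erase _ a huJ).symm
    have hau1 : 1 ≤ a u := by rw [hau]; omega
    omega
  have hS3 : ∀ J, v ≤ J → J ≤ k → S a' J = S a J := by
    intro J hJ1 hJ2
    have huJ : u ∈ Icc 1 J := by simp only [mem_Icc]; omega
    have hvJ : v ∈ Icc 1 J := by simp only [mem_Icc]; omega
    have huJ' : u ∈ Icc 1 J \ {v} := by
      simp only [mem_sdiff, mem_Icc, mem_singleton]
      omega
    have e1 : S a' J = (a v + 1) + ((a u - 1) + ∑ x ∈ (Icc 1 J \ {v}) \ {u}, a x) := by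
      simp only [S, ha'def]
      rw [Finset.sum_update_of_mem hvJ, Finset.sum_update_of_mem huJ']
    have e2 : S a J = a v + (a u + ∑ x ∈ (Icc 1 J \ {v}) \ {u}, a x) := by
      have h1' : u ∈ (Icc 1 J).erase v := by rw [Finset.erase_eq]; exact huJ'
      simp only [S]
      rw [← Finset.add_sum_erase _ a hvJ, ← Finset.add_sum_erase _ a h1',
        Finset.erase_eq, Finset.erase_eq]
    have hau1 : 1 ≤ a u := by rw [hau]; omega
    omega
  have ha'le : ∀ J, 1 ≤ J → J ≤ k → S a' J ≤ S a J := by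
    intro J h1 h2
    rcases lt_or_ge J u with h | h
    · exact (hS1 J h).le
    rcases lt_or_ge J v with h' | h'
    · have := hS2 J h h'; omega
    · exact (hS3 J h' h2).le
  refine ⟨u, v, hu1, huv, hvk, hav1, by rw [hau]; exact hav2, hpos', hmono', ?_, ?_, ?_⟩
  · simp only [← ha'def]
    intro J h1 h2
    rcases lt_or_ge J u with h | h
    · rw [hS1 J h]; exact hab J h1 h2
    rcases lt_or_ge J v with h' | h'
    · have e := hS2 J h h'
      have hw := hwin J (by omega) (by omega)
      omega
    · rw [hS3 J h' h2]; exact hab J h1 h2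
  · simp only [← ha'def]
    rw [hS3 k (by omega) (le_refl _)]; exact htot
  · simp only [← ha'def]
    apply Finset.sum_lt_sum
    · intro J hJ
      simp only [mem_Icc] at hJ
      have := ha'le J hJ.1 hJ.2
      omega
    · refine ⟨u, by simp only [mem_Icc]; omega, ?_⟩
      have e := hS2 u (le_refl _) huv
      have hw := hwin u hiu (by omega)
      omega

lemma key_averse (f : ℕ → ℝ) (hf0 : ∀ s, 1 ≤ s → 0 ≤ f s)
    (hstep : ∀ x y : ℕ, 1 ≤ y → y < x → f (x - 1) * f (y + 1) ≤ f x * f y)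
    (k : ℕ) :
    ∀ N : ℕ, ∀ a b : ℕ → ℕ,
      (∀ j, 1 ≤ j → j ≤ k → 1 ≤ a j) →
      (∀ i j, 1 ≤ i → i ≤ j → j ≤ k → a j ≤ a i) →
      (∀ j, 1 ≤ j → j ≤ k → 1 ≤ b j) →
      (∀ i j, 1 ≤ i → i ≤ j → j ≤ k → b j ≤ b i) →
      (∀ J, 1 ≤ J → J ≤ k → S b J ≤ S a J) →
      S a k = S b k →
      (∑ J ∈ Icc 1 k, (S a J - S b J)) ≤ N →
      ∏ j ∈ Icc 1 k, f (b j) ≤ ∏ j ∈ Icc 1 k, f (a j) := by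
  intro N
  induction N with
  | zero =>
    intro a b ha1 ha2 hb1 hb2 hab htot hmeas
    have hz : ∀ J, 1 ≤ J → J ≤ k → S a J = S b J := by
      intro J h1 h2
      have h3 : S a J - S b J = 0 :=
        Finset.sum_eq_zero_iff.mp (Nat.le_zero.mp hmeas) J (by simp only [mem_Icc]; omega)
      have := hab J h1 h2
      omega
    have heq := eq_of_prefix_eq k a b hz
    apply le_of_eq
    apply Finset.prod_congr rfl
    intro x hx
    simp only [mem_Icc] at hx
    rw [heq x hx.1 hx.2]
  | succ N ih =>
    intro a b ha1 ha2 hb1 hb2 hab htot hmeas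
    by_cases hall : ∀ j, 1 ≤ j → j ≤ k → a j = b j
    · apply le_of_eq
      apply Finset.prod_congr rfl
      intro x hx
      simp only [mem_Icc] at hx
      rw [hall x hx.1 hx.2]
    · push_neg at hall
      obtain ⟨j0, hj01, hj0k, hj0ne⟩ := hall
      obtain ⟨u, v, hu1, huv, hvk, hav1, hav2, hpos', hmono', hab', htot', hmeas'⟩ :=
        transfer_exists k a b ha1 ha2 hb2 hab htot ⟨j0, hj01, hj0k, hj0ne⟩
      set a' := Function.update (Function.update a u (a u - 1)) v (a v + 1) with ha'def
      have step1 : ∏ j ∈ Icc 1 k, f (b j) ≤ ∏ j ∈ Icc 1 k, f (a' j) :=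
        ih a' b hpos' hmono' hb1 hb2 hab' htot' (by omega)
      have hu_mem : u ∈ Icc 1 k := by simp only [mem_Icc]; omega
      have hv_mem : v ∈ Icc 1 k := by simp only [mem_Icc]; omega
      have hu_mem' : u ∈ Icc 1 k \ {v} := by
        simp only [mem_sdiff, mem_Icc, mem_singleton]; omega
      have hfa' : ∀ j, f (a' j) =
          Function.update (Function.update (fun t => f (a t)) u (f (a u - 1))) v
            (f (a v + 1)) j := by
        intro j
        rcases eq_or_ne j v with h | hjv
        · rw [h]; simp [ha'def]
        rcases eq_or_ne j u with h | hju
        · rw [h]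
          rw [Function.update_of_ne (by omega), Function.update_self,
            show a' u = a u - 1 by
              rw [ha'def, Function.update_of_ne (by omega : u ≠ v), Function.update_self]]
        · rw [Function.update_of_ne hjv, Function.update_of_ne hju,
            show a' j = a j by
              rw [ha'def, Function.update_of_ne hjv, Function.update_of_ne hju]]
      have e1 : ∏ j ∈ Icc 1 k, f (a' j) =
          f (a v + 1) * (f (a u - 1) * ∏ j ∈ (Icc 1 k \ {v}) \ {u}, f (a j)) := by
        rw [Finset.prod_congr rfl (fun x _ => hfa' x)]
        rw [Finset.prod_update_of_mem hv_mem, Finset.prod_update_of_mem hu_mem']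
      have e2 : ∏ j ∈ Icc 1 k, f (a j) =
          f (a v) * (f (a u) * ∏ j ∈ (Icc 1 k \ {v}) \ {u}, f (a j)) := by
        have h1' : u ∈ (Icc 1 k).erase v := by rw [Finset.erase_eq]; exact hu_mem'
        rw [← Finset.mul_prod_erase _ _ hv_mem, ← Finset.mul_prod_erase _ _ h1',
          Finset.erase_eq, Finset.erase_eq]
      have hP : 0 ≤ ∏ j ∈ (Icc 1 k \ {v}) \ {u}, f (a j) := by
        apply Finset.prod_nonneg
        intro x hx
        have hx1 := (Finset.mem_sdiff.mp hx).1
        have hx2 := (Finset.mem_sdiff.mp hx1).1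
        simp only [mem_Icc] at hx2
        exact hf0 _ (ha1 x hx2.1 hx2.2)
      have hkey : f (a u - 1) * f (a v + 1) ≤ f (a u) * f (a v) :=
        hstep (a u) (a v) hav1 (by omega)
      have step2 : ∏ j ∈ Icc 1 k, f (a' j) ≤ ∏ j ∈ Icc 1 k, f (a j) := by
        rw [e1, e2]
        nlinarith [mul_le_mul_of_nonneg_right hkey hP]
      exact le_trans step1 step2

lemma key_seeking (f : ℕ → ℝ) (hf0 : ∀ s, 1 ≤ s → 0 ≤ f s)
    (hstep : ∀ x y : ℕ, 1 ≤ y → y < x → f x * f y ≤ f (x - 1) * f (y + 1))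
    (k : ℕ) :
    ∀ N : ℕ, ∀ a b : ℕ → ℕ,
      (∀ j, 1 ≤ j → j ≤ k → 1 ≤ a j) →
      (∀ i j, 1 ≤ i → i ≤ j → j ≤ k → a j ≤ a i) →
      (∀ j, 1 ≤ j → j ≤ k → 1 ≤ b j) →
      (∀ i j, 1 ≤ i → i ≤ j → j ≤ k → b j ≤ b i) →
      (∀ J, 1 ≤ J → J ≤ k → S b J ≤ S a J) →
      S a k = S b k →
      (∑ J ∈ Icc 1 k, (S a J - S b J)) ≤ N →
      ∏ j ∈ Icc 1 k, f (a j) ≤ ∏ j ∈ Icc 1 k, f (b j) := by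
  intro N
  induction N with
  | zero =>
    intro a b ha1 ha2 hb1 hb2 hab htot hmeas
    have hz : ∀ J, 1 ≤ J → J ≤ k → S a J = S b J := by
      intro J h1 h2
      have h3 : S a J - S b J = 0 :=
        Finset.sum_eq_zero_iff.mp (Nat.le_zero.mp hmeas) J (by simp only [mem_Icc]; omega)
      have := hab J h1 h2
      omega
    have heq := eq_of_prefix_eq k a b hz
    apply le_of_eq
    apply Finset.prod_congr rfl
    intro x hx
    simp only [mem_Icc] at hx
    rw [heq x hx.1 hx.2]
  | succ N ih =>
    intro a b ha1 ha2 hb1 hb2 hab htot hmeas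
    by_cases hall : ∀ j, 1 ≤ j → j ≤ k → a j = b j
    · apply le_of_eq
      apply Finset.prod_congr rfl
      intro x hx
      simp only [mem_Icc] at hx
      rw [hall x hx.1 hx.2]
    · push_neg at hall
      obtain ⟨j0, hj01, hj0k, hj0ne⟩ := hall
      obtain ⟨u, v, hu1, huv, hvk, hav1, hav2, hpos', hmono', hab', htot', hmeas'⟩ :=
        transfer_exists k a b ha1 ha2 hb2 hab htot ⟨j0, hj01, hj0k, hj0ne⟩
      set a' := Function.update (Function.update a u (a u - 1)) v (a v + 1) with ha'def
      have step1 : ∏ j ∈ Icc 1 k, f (a' j) ≤ ∏ j ∈ Icc 1 k, f (b j) :=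
        ih a' b hpos' hmono' hb1 hb2 hab' htot' (by omega)
      have hu_mem : u ∈ Icc 1 k := by simp only [mem_Icc]; omega
      have hv_mem : v ∈ Icc 1 k := by simp only [mem_Icc]; omega
      have hu_mem' : u ∈ Icc 1 k \ {v} := by
        simp only [mem_sdiff, mem_Icc, mem_singleton]; omega
      have hfa' : ∀ j, f (a' j) =
          Function.update (Function.update (fun t => f (a t)) u (f (a u - 1))) v
            (f (a v + 1)) j := by
        intro j
        rcases eq_or_ne j v with h | hjv
        · rw [h]; simp [ha'def]
        rcases eq_or_ne j u with h | hju
        · rw [h]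
          rw [Function.update_of_ne (by omega), Function.update_self,
            show a' u = a u - 1 by
              rw [ha'def, Function.update_of_ne (by omega : u ≠ v), Function.update_self]]
        · rw [Function.update_of_ne hjv, Function.update_of_ne hju,
            show a' j = a j by
              rw [ha'def, Function.update_of_ne hjv, Function.update_of_ne hju]]
      have e1 : ∏ j ∈ Icc 1 k, f (a' j) =
          f (a v + 1) * (f (a u - 1) * ∏ j ∈ (Icc 1 k \ {v}) \ {u}, f (a j)) := by
        rw [Finset.prod_congr rfl (fun x _ => hfa' x)]
        rw [Finset.prod_update_of_mem hv_mem, Finset.prod_update_of_mem hu_mem']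
      have e2 : ∏ j ∈ Icc 1 k, f (a j) =
          f (a v) * (f (a u) * ∏ j ∈ (Icc 1 k \ {v}) \ {u}, f (a j)) := by
        have h1' : u ∈ (Icc 1 k).erase v := by rw [Finset.erase_eq]; exact hu_mem'
        rw [← Finset.mul_prod_erase _ _ hv_mem, ← Finset.mul_prod_erase _ _ h1',
          Finset.erase_eq, Finset.erase_eq]
      have hP : 0 ≤ ∏ j ∈ (Icc 1 k \ {v}) \ {u}, f (a j) := by
        apply Finset.prod_nonneg
        intro x hx
        have hx1 := (Finset.mem_sdiff.mp hx).1
        have hx2 := (Finset.mem_sdiff.mp hx1).1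
        simp only [mem_Icc] at hx2
        exact hf0 _ (ha1 x hx2.1 hx2.2)
      have hkey : f (a u) * f (a v) ≤ f (a u - 1) * f (a v + 1) :=
        hstep (a u) (a v) hav1 (by omega)
      have step2 : ∏ j ∈ Icc 1 k, f (a j) ≤ ∏ j ∈ Icc 1 k, f (a' j) := by
        rw [e1, e2]
        nlinarith [mul_le_mul_of_nonneg_right hkey hP]
      exact le_trans step2 step1

lemma conv_step (f : ℕ → ℝ) (hf0 : ∀ s, 1 ≤ s → 0 ≤ f s) (hf1 : 0 < f 1)
    (hconv : ∀ s, 2 ≤ s → f s ^ 2 ≤ f (s - 1) * f (s + 1)) :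
    ∀ x y : ℕ, 1 ≤ y → y < x → f (x - 1) * f (y + 1) ≤ f x * f y := by
  by_cases h2 : f 2 ≤ 0
  · have hf2 : f 2 = 0 := le_antisymm h2 (hf0 2 (by omega))
    have hz : ∀ s, 2 ≤ s → f s = 0 := by
      intro s hs
      induction s, hs using Nat.le_induction with
      | base => exact hf2
      | succ n hn ihn =>
        have hc := hconv (n + 1) (by omega)
        have e : n + 1 - 1 = n := rfl
        rw [e] at hc
        have h0 : f n * f (n + 1 + 1) = 0 := by rw [ihn]; ring
        nlinarith [sq_nonneg (f (n+1))]
    intro x y hy hyx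
    rw [hz (y + 1) (by omega)]
    have := hf0 x (by omega)
    have := hf0 y hy
    nlinarith
  · push_neg at h2
    have hpos : ∀ s, 1 ≤ s → 0 < f s := by
      have haux : ∀ s : ℕ, 0 < f (s + 1) ∧ 0 < f (s + 2) := by
        intro s
        induction s with
        | zero => exact ⟨hf1, h2⟩
        | succ n ihn =>
          refine ⟨ihn.2, ?_⟩
          have hc := hconv (n + 2) (by omega)
          have e : n + 2 - 1 = n + 1 := rfl
          rw [e] at hc
          have e2 : n + 2 + 1 = n + 1 + 2 := rfl
          rw [e2] at hc
          nlinarith [ihn.1, ihn.2]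
      intro s hs
      obtain ⟨t, rfl⟩ : ∃ t, s = t + 1 := ⟨s - 1, by omega⟩
      exact (haux t).1
    have hr : ∀ d y : ℕ, 1 ≤ y → f (y + d) * f (y + 1) ≤ f (y + d + 1) * f y := by
      intro d
      induction d with
      | zero => intro y hy; simp [mul_comm]
      | succ n ihn =>
        intro y hy
        have hc := hconv (y + n + 1) (by omega)
        have e : y + n + 1 - 1 = y + n := rfl
        rw [e] at hc
        have hi := ihn y hy
        have h1 := hpos (y + n + 1) (by omega)
        have h2' := hpos (y + 1) (by omega)
        have h3 := hpos y hy
        have h4 := hpos (y + n) (by omega)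
        have h5 := hpos (y + n + 1 + 1) (by omega)
        have goal : f (y + n + 1) * f (y + 1) ≤ f (y + n + 1 + 1) * f y := by
          nlinarith [mul_le_mul_of_nonneg_right hi (le_of_lt h5),
            mul_le_mul_of_nonneg_right hc (le_of_lt h2')]
        have e1 : y + (n + 1) = y + n + 1 := rfl
        rw [e1]
        exact goal
    intro x y hy hyx
    obtain ⟨d, rfl⟩ : ∃ d, x = y + d + 1 := ⟨x - y - 1, by omega⟩
    have := hr d y hy
    have e : y + d + 1 - 1 = y + d := rfl
    rw [e]
    exact this

lemma conc_step (f : ℕ → ℝ) (hf0 : ∀ s, 1 ≤ s → 0 ≤ f s) (hf1 : 0 < f 1)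
    (hconc : ∀ s, 2 ≤ s → f (s - 1) * f (s + 1) ≤ f s ^ 2)
    (hniz : ∀ u s v : ℕ, 1 ≤ u → u ≤ s → s ≤ v → 0 < f u → 0 < f v → 0 < f s) :
    ∀ x y : ℕ, 1 ≤ y → y < x → f x * f y ≤ f (x - 1) * f (y + 1) := by
  have hr : ∀ d y : ℕ, 1 ≤ y → (∀ t, 1 ≤ t → t ≤ y + d + 1 → 0 < f t) →
      f (y + d + 1) * f y ≤ f (y + d) * f (y + 1) := by
    intro d
    induction d with
    | zero => intro y hy _; simp [mul_comm]
    | succ n ihn =>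
      intro y hy hpos
      have hc := hconc (y + n + 1) (by omega)
      have e : y + n + 1 - 1 = y + n := rfl
      rw [e] at hc
      have hi := ihn y hy (fun t h1 h2 => hpos t h1 (by omega))
      have h1 := hpos (y + n + 1) (by omega) (by omega)
      have h2' := hpos (y + 1) (by omega) (by omega)
      have h3 := hpos y hy (by omega)
      have h4 := hpos (y + n) (by omega) (by omega)
      have goal : f (y + n + 1 + 1) * f y ≤ f (y + n + 1) * f (y + 1) := by
        nlinarith [mul_le_mul_of_nonneg_right hi (le_of_lt h1),
          mul_le_mul_of_nonneg_right hc (le_of_lt h3)]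
      have e1 : y + (n + 1) = y + n + 1 := rfl
      rw [e1]
      exact goal
  intro x y hy hyx
  by_cases hx : f x ≤ 0
  · have hfx : f x = 0 := le_antisymm hx (hf0 x (by omega))
    rw [hfx]
    have := hf0 (x - 1) (by omega)
    have := hf0 (y + 1) (by omega)
    nlinarith
  · push_neg at hx
    have hpos : ∀ t, 1 ≤ t → t ≤ x → 0 < f t :=
      fun t h1 h2 => hniz 1 t x (le_refl 1) h1 h2 hf1 hx
    obtain ⟨d, rfl⟩ : ∃ d, x = y + d + 1 := ⟨x - y - 1, by omega⟩
    have := hr d y hy hpos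
    have e : y + d + 1 - 1 = y + d := rfl
    rw [e]
    exact this

end EscAux

/-- The ESC model with cluster-size p.m.f. `μ` (on the positive integers,
with `μ_1 > 0`) is balance-averse for every `n` iff `(s!·μ_s)` is log-convex,
and balance-seeking for every `n` iff `(s!·μ_s)` is log-concave. -/
theorem esc_balancedness_iff
    (μ : ℕ → ℝ) (hnn : ∀ s, 1 ≤ s → 0 ≤ μ s)
    (hsum : ∑' s : ℕ, μ (s + 1) = 1) (hμ1 : 0 < μ 1) :
    ((∀ n k : ℕ, 1 ≤ n → 1 ≤ k → k ≤ n →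
        ∀ a b : ℕ → ℕ, IsIntegerPartition n k a → IsIntegerPartition n k b →
          MoreBalanced k a b →
          ∏ j ∈ Finset.Icc 1 k, ((Nat.factorial (b j) : ℝ) * μ (b j)) ≤
            ∏ j ∈ Finset.Icc 1 k, ((Nat.factorial (a j) : ℝ) * μ (a j))) ↔
      (∀ s : ℕ, 2 ≤ s →
        ((Nat.factorial s : ℝ) * μ s) ^ 2 ≤
          ((Nat.factorial (s - 1) : ℝ) * μ (s - 1)) *
            ((Nat.factorial (s + 1) : ℝ) * μ (s + 1)))) ∧
    ((∀ n k : ℕ, 1 ≤ n → 1 ≤ k → k ≤ n →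
        ∀ a b : ℕ → ℕ, IsIntegerPartition n k a → IsIntegerPartition n k b →
          MoreBalanced k a b →
          ∏ j ∈ Finset.Icc 1 k, ((Nat.factorial (a j) : ℝ) * μ (a j)) ≤
            ∏ j ∈ Finset.Icc 1 k, ((Nat.factorial (b j) : ℝ) * μ (b j))) ↔
      ((∀ s : ℕ, 2 ≤ s →
          ((Nat.factorial (s - 1) : ℝ) * μ (s - 1)) *
            ((Nat.factorial (s + 1) : ℝ) * μ (s + 1)) ≤
              ((Nat.factorial s : ℝ) * μ s) ^ 2) ∧
        NoInternalZeros (fun s => (Nat.factorial s : ℝ) * μ s))) := by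
  classical
  have hf0 : ∀ t, 1 ≤ t → 0 ≤ (Nat.factorial t : ℝ) * μ t :=
    fun t ht => mul_nonneg (Nat.cast_nonneg _) (hnn t ht)
  have hf1 : 0 < (Nat.factorial 1 : ℝ) * μ 1 := by
    simp only [Nat.factorial_one, Nat.cast_one, one_mul]
    exact hμ1
  have hIcc : Finset.Icc 1 2 = ({1, 2} : Finset ℕ) := by decide
  -- generic two-part comparison extracted from a balance statement
  constructor
  · constructor
    · -- balance-averse → log-convex
      intro hbal s hs
      set a : ℕ → ℕ := fun j => if j = 1 then s + 1 else s - 1 with hadef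
      set b : ℕ → ℕ := fun _ => s with hbdef
      have hpa : IsIntegerPartition (2*s) 2 a := by
        refine ⟨?_, ?_, ?_⟩
        · intro j h1 h2
          by_cases h : j = 1 <;> simp [hadef, h] <;> omega
        · intro i j h1 hij hj
          have hi2 : i ≤ 2 := le_trans hij hj
          interval_cases i <;> interval_cases j <;> simp [hadef] <;> omega
        · rw [hIcc, Finset.sum_pair (by norm_num)]
          simp [hadef]; omega
      have hpb : IsIntegerPartition (2*s) 2 b := by
        refine ⟨fun j _ _ => by simp [hbdef]; omega, fun i j _ _ _ => le_refl _, ?_⟩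
        rw [hIcc, Finset.sum_pair (by norm_num)]; simp [hbdef]; omega
      have hmb : MoreBalanced 2 a b := by
        constructor
        · intro J h1 h2
          interval_cases J
          · simp [hadef, hbdef]
          · rw [hIcc, Finset.sum_pair (by norm_num), Finset.sum_pair (by norm_num)]
            simp [hadef, hbdef]; omega
        · exact ⟨1, le_refl _, by norm_num, by simp [hadef, hbdef]⟩
      have h := hbal (2*s) 2 (by omega) (by omega) (by omega) a b hpa hpb hmb
      rw [hIcc, Finset.prod_pair (by norm_num), Finset.prod_pair (by norm_num)] at h
      simp only [hadef, hbdef] at h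
      norm_num at h
      nlinarith [h]
    · -- log-convex → balance-averse
      intro hconv n k hn hk hkn a b ha hb hmb
      obtain ⟨ha1, ha2, ha3⟩ := ha
      obtain ⟨hb1, hb2, hb3⟩ := hb
      exact key_averse (fun t => (Nat.factorial t : ℝ) * μ t) hf0
        (conv_step _ hf0 hf1 hconv) k _ a b ha1 ha2 hb1 hb2 hmb.1
        (show S a k = S b k from ha3.trans hb3.symm) (le_refl _)
  · constructor
    · -- balance-seeking → log-concave ∧ no internal zeros
      intro hbal
      constructor
      · intro s hs
        set a : ℕ → ℕ := fun j => if j = 1 then s + 1 else s - 1 with hadef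
        set b : ℕ → ℕ := fun _ => s with hbdef
        have hpa : IsIntegerPartition (2*s) 2 a := by
          refine ⟨?_, ?_, ?_⟩
          · intro j h1 h2
            by_cases h : j = 1 <;> simp [hadef, h] <;> omega
          · intro i j h1 hij hj
            have hi2 : i ≤ 2 := le_trans hij hj
            interval_cases i <;> interval_cases j <;> simp [hadef] <;> omega
          · rw [hIcc, Finset.sum_pair (by norm_num)]
            simp [hadef]; omega
        have hpb : IsIntegerPartition (2*s) 2 b := by
          refine ⟨fun j _ _ => by simp [hbdef]; omega, fun i j _ _ _ => le_refl _, ?_⟩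
          rw [hIcc, Finset.sum_pair (by norm_num)]; simp [hbdef]; omega
        have hmb : MoreBalanced 2 a b := by
          constructor
          · intro J h1 h2
            interval_cases J
            · simp [hadef, hbdef]
            · rw [hIcc, Finset.sum_pair (by norm_num), Finset.sum_pair (by norm_num)]
              simp [hadef, hbdef]; omega
          · exact ⟨1, le_refl _, by norm_num, by simp [hadef, hbdef]⟩
        have h := hbal (2*s) 2 (by omega) (by omega) (by omega) a b hpa hpb hmb
        rw [hIcc, Finset.prod_pair (by norm_num), Finset.prod_pair (by norm_num)] at h
        simp only [hadef, hbdef] at h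
        norm_num at h
        nlinarith [h]
      · -- no internal zeros
        intro u s v h1u hus hsv hfu hfv
        simp only at hfu hfv ⊢
        rcases eq_or_lt_of_le hus with h | hus'
        · rw [← h]; exact hfu
        rcases eq_or_lt_of_le hsv with h | hsv'
        · rw [h]; exact hfv
        by_contra hcon
        push_neg at hcon
        have hfs : (Nat.factorial s : ℝ) * μ s = 0 :=
          le_antisymm hcon (hf0 s (by omega))
        set b1 := max s (u + v - s) with hb1def
        set b2 := u + v - b1 with hb2def
        set a : ℕ → ℕ := fun j => if j = 1 then v else u with hadef
        set b : ℕ → ℕ := fun j => if j = 1 then b1 else b2 with hbdef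
        have hb1b : b1 = s ∨ b2 = s := by omega
        have hpa : IsIntegerPartition (u + v) 2 a := by
          refine ⟨?_, ?_, ?_⟩
          · intro j h1 h2
            by_cases h : j = 1 <;> simp [hadef, h] <;> omega
          · intro i j h1 hij hj
            have hi2 : i ≤ 2 := le_trans hij hj
            interval_cases i <;> interval_cases j <;> simp [hadef] <;> omega
          · rw [hIcc, Finset.sum_pair (by norm_num)]
            simp [hadef]; omega
        have hpb : IsIntegerPartition (u + v) 2 b := by
          refine ⟨?_, ?_, ?_⟩
          · intro j h1 h2
            by_cases h : j = 1 <;> simp [hbdef, h] <;> omega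
          · intro i j h1 hij hj
            have hi2 : i ≤ 2 := le_trans hij hj
            interval_cases i <;> interval_cases j <;> simp [hbdef] <;> omega
          · rw [hIcc, Finset.sum_pair (by norm_num)]
            simp [hbdef]; omega
        have hmb : MoreBalanced 2 a b := by
          constructor
          · intro J h1 h2
            interval_cases J
            · simp [hadef, hbdef]; omega
            · rw [hIcc, Finset.sum_pair (by norm_num), Finset.sum_pair (by norm_num)]
              simp [hadef, hbdef]; omega
          · refine ⟨1, le_refl _, by norm_num, by simp [hadef, hbdef]; omega⟩
        have h := hbal (u + v) 2 (by omega) (by omega) (by omega) a b hpa hpb hmb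
        rw [hIcc, Finset.prod_pair (by norm_num), Finset.prod_pair (by norm_num)] at h
        simp only [hadef, hbdef] at h
        norm_num at h
        have hz : (Nat.factorial b1 : ℝ) * μ b1 * ((Nat.factorial b2 : ℝ) * μ b2) = 0 := by
          rcases hb1b with h' | h'
          · rw [h', hfs]; ring
          · rw [h', hfs]; ring
        have hpos : 0 < (Nat.factorial v : ℝ) * μ v * ((Nat.factorial u : ℝ) * μ u) :=
          mul_pos hfv hfu
        linarith
    · -- log-concave ∧ no internal zeros → balance-seeking
      rintro ⟨hconc, hniz⟩ n k hn hk hkn a b ha hb hmb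
      obtain ⟨ha1, ha2, ha3⟩ := ha
      obtain ⟨hb1, hb2, hb3⟩ := hb
      exact key_seeking (fun t => (Nat.factorial t : ℝ) * μ t) hf0
        (conc_step _ hf0 hf1 hconc hniz) k _ a b ha1 ha2 hb1 hb2 hmb.1
        (show S a k = S b k from ha3.trans hb3.symm) (le_refl _)
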